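/- arXiv:1808.02156 — 2 statements merged into one kernel-verified Lean document; each statement's English description precedes it below -/
import Mathlib

section
/- Let B be a skew-symmetrizable n×n integer matrix and let t be a vertex reached from the initial vertex t_0 by a path (i_1,…,i_m). Then G^{−B;t_0}_t = G^{B;t_0}_t + B · F^{B;t_0}_t, where G^{−B;t_0}_t denotes the G-matrix for the initial matrix −B along the same path. -/
open Matrix

section Defs

variable {ι : Type} [Fintype ι] [DecidableEq ι]
variable {R : Type} [CommRing R] [LinearOrder R] [IsStrictOrderedRing R]

/-- Entrywise positive part `[A]₊`. -/
def matPos (A : Matrix ι ι R) : Matrix ι ι R := fun i j => max (A i j) 0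

/-- `A^{k•}`: the matrix keeping only the `k`-th row of `A`. -/
def rowSel (k : ι) (A : Matrix ι ι R) : Matrix ι ι R := fun i j => if i = k then A i j else 0

/-- `A^{•k}`: the matrix keeping only the `k`-th column of `A`. -/
def colSel (k : ι) (A : Matrix ι ι R) : Matrix ι ι R := fun i j => if j = k then A i j else 0

/-- Entrywise maximum of two matrices. -/
def emax (A B : Matrix ι ι R) : Matrix ι ι R := fun i j => max (A i j) (B i j)

/-- `J_ℓ`: identity matrix with `(ℓ,ℓ)` entry replaced by `-1`. -/
def Jmat (ℓ : ι) : Matrix ι ι R := Matrix.diagonal fun i => if i = ℓ then -1 else 1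

/-- Matrix mutation `μ_k(B)` in direction `k`. -/
def mutate (B : Matrix ι ι R) (k : ι) : Matrix ι ι R := fun i j =>
  if i = k ∨ j = k then -(B i j)
  else B i j + max (B i k) 0 * B k j + B i k * max (-(B k j)) 0

/-- The data `(B_t, C_t, G_t, F_t)` attached to a vertex. -/
structure SeedData (ι R : Type) where
  B : Matrix ι ι R
  C : Matrix ι ι R
  G : Matrix ι ι R
  F : Matrix ι ι R

/-- One final-seed mutation step in direction `ℓ` (with initial exchange matrix `B0`). -/
def seedStep (B0 : Matrix ι ι R) (s : SeedData ι R) (ℓ : ι) : SeedData ι R where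
  B := mutate s.B ℓ
  C := s.C * (Jmat ℓ + rowSel ℓ (matPos s.B)) + colSel ℓ (matPos (-s.C)) * s.B
  G := s.G * (Jmat ℓ + colSel ℓ (matPos s.B)) - B0 * colSel ℓ (matPos s.C)
  F := s.F * Jmat ℓ + emax (colSel ℓ (matPos s.C) + s.F * colSel ℓ (matPos s.B))
      (colSel ℓ (matPos (-s.C)) + s.F * colSel ℓ (matPos (-s.B)))

/-- The seed data at the endpoint of the path `p` starting from the initial vertex. -/
def seedOf (B0 : Matrix ι ι R) (p : List ι) : SeedData ι R :=
  p.foldl (seedStep B0) ⟨B0, 1, 1, 0⟩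

/-- The exchange matrix `B_t` at the end of the path `p`. -/
def Bpath (B : Matrix ι ι R) (p : List ι) : Matrix ι ι R := (seedOf B p).B

/-- The `C`-matrix `C^{B;t_0}_t` at the end of the path `p`. -/
def Cmat (B : Matrix ι ι R) (p : List ι) : Matrix ι ι R := (seedOf B p).C

/-- The `G`-matrix `G^{B;t_0}_t` at the end of the path `p`. -/
def Gmat (B : Matrix ι ι R) (p : List ι) : Matrix ι ι R := (seedOf B p).G

/-- The `F`-matrix `F^{B;t_0}_t` at the end of the path `p`. -/
def Fmat (B : Matrix ι ι R) (p : List ι) : Matrix ι ι R := (seedOf B p).F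

/-- `B` is skew-symmetrizable: `DB` is skew-symmetric for some positive diagonal `D`. -/
def IsSkewSymmetrizable (B : Matrix ι ι ℤ) : Prop :=
  ∃ d : ι → ℤ, (∀ i, 0 < d i) ∧ (Matrix.diagonal d * B)ᵀ = -(Matrix.diagonal d * B)

/-- Column sign-coherence: every column is nonzero and has all entries of one sign. -/
def ColSignCoherent (A : Matrix ι ι ℤ) : Prop :=
  ∀ j, (∃ i, A i j ≠ 0) ∧ ((∀ i, 0 ≤ A i j) ∨ (∀ i, A i j ≤ 0))

/-- Row sign-coherence: every row is nonzero and has all entries of one sign. -/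
def RowSignCoherent (A : Matrix ι ι ℤ) : Prop :=
  ∀ i, (∃ j, A i j ≠ 0) ∧ ((∀ j, 0 ≤ A i j) ∨ (∀ j, A i j ≤ 0))

/-- `ε` is the column sign `ε_{•ℓ}(A)` of the (sign-coherent, nonzero) `ℓ`-th column of `A`. -/
def IsColSign (ε : ℤ) (A : Matrix ι ι ℤ) (ℓ : ι) : Prop :=
  (ε = 1 ∨ ε = -1) ∧ (∃ i, A i ℓ ≠ 0) ∧ ∀ i, 0 ≤ ε * A i ℓ

/-- `ε` is the row sign `ε_{k•}(A)` of the (sign-coherent, nonzero) `k`-th row of `A`. -/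
def IsRowSign (ε : ℤ) (A : Matrix ι ι ℤ) (k : ι) : Prop :=
  (ε = 1 ∨ ε = -1) ∧ (∃ j, A k j ≠ 0) ∧ ∀ j, 0 ≤ ε * A k j

/-- Sign-coherence of `C`-matrices: for every skew-symmetrizable initial integer matrix and
every path, the associated `C`-matrix is column sign-coherent. -/
def SignCoherenceOfC : Prop :=
  ∀ (κ : Type) [Fintype κ] [DecidableEq κ], ∀ B : Matrix κ κ ℤ,
    IsSkewSymmetrizable B → ∀ p : List κ, ColSignCoherent (Cmat B p)

/-- The principal extension `B̄ = [[B, -I],[I, O]]` of `B`, on the index type `Fin n ⊕ Fin n`. -/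
def pext {n : ℕ} (B : Matrix (Fin n) (Fin n) ℤ) :
    Matrix (Fin n ⊕ Fin n) (Fin n ⊕ Fin n) ℤ :=
  Matrix.fromBlocks B (-1) 1 0

noncomputable section FPolys

/-- The ambient field of rational functions `ℚ(y_i : i ∈ ι)` (fraction field of `ℤ[y_i]`). -/
abbrev FField (ι : Type) := FractionRing (MvPolynomial ι ℤ)

/-- The variable `y_i` inside the fraction field. -/
def yvar (i : ι) : FField ι := algebraMap (MvPolynomial ι ℤ) (FField ι) (MvPolynomial.X i)

/-- One mutation step for the triple `(B_t, C_t, (F_{j;t})_j)`. -/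
def fpolyStep (s : Matrix ι ι ℤ × Matrix ι ι ℤ × (ι → FField ι)) (ℓ : ι) :
    Matrix ι ι ℤ × Matrix ι ι ℤ × (ι → FField ι) :=
  ⟨mutate s.1 ℓ,
   s.2.1 * (Jmat ℓ + rowSel ℓ (matPos s.1)) + colSel ℓ (matPos (-s.2.1)) * s.1,
   fun j => if j = ℓ then
     (s.2.2 ℓ)⁻¹ *
       ((∏ i, yvar i ^ (max (s.2.1 i ℓ) 0).toNat) * (∏ i, s.2.2 i ^ (max (s.1 i ℓ) 0).toNat)
        + (∏ i, yvar i ^ (max (-(s.2.1 i ℓ)) 0).toNat) *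
            (∏ i, s.2.2 i ^ (max (-(s.1 i ℓ)) 0).toNat))
   else s.2.2 j⟩

/-- The `F`-polynomial `F^{B;t_0}_{j;t}` (as an element of the field of rational functions)
at the end of the path `p`. -/
def Fpoly (B : Matrix ι ι ℤ) (p : List ι) : ι → FField ι :=
  (p.foldl fpolyStep ⟨B, 1, fun _ => 1⟩).2.2

/-- The polynomial representing an element of the fraction field (when it is a polynomial). -/
def polyOf (x : FField ι) : MvPolynomial ι ℤ := by
  classical exact
    if h : ∃ q : MvPolynomial ι ℤ, algebraMap (MvPolynomial ι ℤ) (FField ι) q = x then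
      h.choose else 0

/-- The `H`-matrix `H^{B;t_0}_t`: `h_{ij;t}` is the minimum over exponent vectors `a` in the
support of `F^{B;t_0}_{j;t}` of `-a_i + ∑_{l ≠ i} [-b_{il}]₊ a_l`. -/
def Hmat (B : Matrix ι ι ℤ) (p : List ι) : Matrix ι ι ℤ := fun i j =>
  if h : (polyOf (Fpoly B p j)).support.Nonempty then
    (polyOf (Fpoly B p j)).support.inf' h
      (fun a => -(a i : ℤ) + ∑ l ∈ Finset.univ.erase i, max (-(B i l)) 0 * (a l : ℤ))
  else 0

end FPolys

/-- The embedding `ℚ(y_1,…,y_n) → ℚ(y_1,…,y_{2n})` sending `y_i` to `y_i`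
(the second batch of variables indexed by the right summand). -/
noncomputable def embK (n : ℕ) : FField (Fin n) →+* FField (Fin n ⊕ Fin n) :=
  IsFractionRing.lift
    (g := (algebraMap (MvPolynomial (Fin n ⊕ Fin n) ℤ) (FField (Fin n ⊕ Fin n))).comp
      (MvPolynomial.rename (Sum.inl : Fin n → Fin n ⊕ Fin n)).toRingHom)
    (by
      intro a b hab
      simp only [RingHom.coe_comp, Function.comp_apply, AlgHom.toRingHom_eq_coe,
        RingHom.coe_coe] at hab
      exact MvPolynomial.rename_injective _ Sum.inl_injective
        (IsFractionRing.injective (MvPolynomial (Fin n ⊕ Fin n) ℤ)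
          (FField (Fin n ⊕ Fin n)) hab))

/-- `D⁻¹ Cᵀ D` over `ℚ`, for the positive diagonal skew-symmetrizer `D = diagonal d`. -/
noncomputable def dCd {n : ℕ} (d : Fin n → ℤ) (C : Matrix (Fin n) (Fin n) ℤ) :
    Matrix (Fin n) (Fin n) ℚ :=
  (Matrix.diagonal fun i => (d i : ℚ))⁻¹ * (C.map (Int.cast : ℤ → ℚ))ᵀ *
    Matrix.diagonal fun i => (d i : ℚ)

end Defs

/-!
Along any path, the seed data of `-B` is obtained from that of `B` by the map
`(B_t, C_t, G_t, F_t) ↦ (-B_t, C_t + F_t B_t, G_t + B F_t, F_t)`, so it suffices to check that this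
map commutes with a single mutation. With `E` the matrix unit at `(ℓ, ℓ)` one has `A^{•ℓ} = A E`,
`A^{ℓ•} = E A`, `J_ℓ = 1 - 2E`, `max(a, b) = b + [a - b]_+` and `[-A]_+ = [A]_+ - A`. Since `B_t`
stays skew-symmetrizable, its diagonal vanishes; hence
`μ_ℓ(B_t) = (J_ℓ + [B_t]^{•ℓ}_+) B_t (J_ℓ + [-B_t]^{ℓ•}_+)` and `E B_t E = E [B_t]_+ E = 0`.
Every mutation rule thus becomes polynomial in these matrices, and each step is a noncommutative
polynomial identity modulo these relations, `E² = E` and, for `G`, the relation `G_t B_t = B C_t`,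
which is itself preserved by mutation.
-/

section OrderedRing

variable {ι R : Type} [CommRing R] [LinearOrder R] [IsStrictOrderedRing R]

theorem matPos_neg (X : Matrix ι ι R) : matPos (-X) = matPos X - X := by
  ext i j
  simp only [matPos, Matrix.neg_apply, Matrix.sub_apply, max_neg_zero]
  abel

theorem emax_eq_add_matPos_sub (X Y : Matrix ι ι R) : emax X Y = Y + matPos (X - Y) := by
  ext i j
  simp only [emax, matPos, Matrix.add_apply, Matrix.sub_apply]
  rcases le_total (X i j) (Y i j) with h | h
  · simp [h, sub_nonpos.2 h]
  · simp [h, sub_nonneg.2 h]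

theorem mutate_neg [DecidableEq ι] (X : Matrix ι ι R) (ℓ : ι) :
    mutate (-X) ℓ = -mutate X ℓ := by
  ext i j
  simp only [mutate, Matrix.neg_apply, neg_neg]
  split_ifs
  · rw [neg_neg]
  · rw [max_neg_zero, max_neg_zero]
    ring

end OrderedRing

section MatrixUnit

variable {ι R : Type} [DecidableEq ι] [CommRing R]

theorem Jmat_eq_one_sub_single (ℓ : ι) : (Jmat ℓ : Matrix ι ι R) = 1 - 2 • single ℓ ℓ 1 := by
  ext i j
  by_cases hij : i = j
  · subst hij
    by_cases hi : i = ℓ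
    · subst hi; norm_num [Jmat]
    · simp [Jmat, hi, single_apply_of_row_ne (Ne.symm hi)]
  · by_cases hi : i = ℓ
    · subst hi; simp [Jmat, hij]
    · simp [Jmat, hij, single_apply_of_row_ne (Ne.symm hi)]

variable [Fintype ι] (M X : Matrix ι ι R) (ℓ : ι)

theorem colSel_eq_mul_single : colSel ℓ X = X * single ℓ ℓ 1 := by
  ext i j
  by_cases h : j = ℓ
  · subst h; simp [colSel]
  · simp [colSel, h]

theorem rowSel_eq_single_mul : rowSel ℓ X = single ℓ ℓ 1 * X := by
  ext i j
  by_cases h : i = ℓ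
  · subst h; simp [rowSel]
  · simp [rowSel, h]

theorem emax_mul_single [LinearOrder R] :
    emax (M * single ℓ ℓ 1) (X * single ℓ ℓ 1) = emax M X * single ℓ ℓ 1 := by
  ext i j
  by_cases h : j = ℓ
  · subst h; simp [emax]
  · simp [emax, h]

theorem mul_single_mul_single : M * single ℓ ℓ 1 * single ℓ ℓ 1 = M * single ℓ ℓ 1 := by
  rw [mul_assoc, single_mul_single_same, one_mul]

theorem mul_single_mul_mul_single_of_eq_zero {X : Matrix ι ι R} {ℓ : ι} (h : X ℓ ℓ = 0)
    (M : Matrix ι ι R) : M * single ℓ ℓ 1 * X * single ℓ ℓ 1 = 0 := by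
  rw [mul_assoc, mul_assoc, ← mul_assoc _ X, single_mul_mul_single, h]
  simp

theorem Jmat_mul_apply (i j : ι) :
    ((Jmat ℓ : Matrix ι ι R) * M) i j = if i = ℓ then -M i j else M i j := by
  rw [Jmat, diagonal_mul]
  split_ifs <;> simp

theorem mul_Jmat_apply (i j : ι) :
    (M * (Jmat ℓ : Matrix ι ι R)) i j = if j = ℓ then -M i j else M i j := by
  rw [Jmat, mul_diagonal]
  split_ifs <;> simp

theorem mul_single_mul_apply (i j : ι) : (M * single ℓ ℓ (1 : R) * X) i j = M i ℓ * X ℓ j := by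
  rw [mul_assoc, mul_apply, Finset.sum_eq_single ℓ] <;> intros <;> simp_all

theorem mutate_eq_mul [LinearOrder R] {X : Matrix ι ι R} {ℓ : ι} (h : X ℓ ℓ = 0) :
    mutate X ℓ = (Jmat ℓ + colSel ℓ (matPos X)) * X * (Jmat ℓ + rowSel ℓ (matPos (-X))) := by
  ext i j
  simp only [colSel_eq_mul_single, rowSel_eq_single_mul, mul_add, add_mul, ← mul_assoc,
    Matrix.add_apply, mul_Jmat_apply, Jmat_mul_apply, mul_single_mul_apply]
  by_cases hi : i = ℓ <;> by_cases hj : j = ℓ <;> simp [mutate, matPos, hi, hj, h]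

end MatrixUnit

section SeedStep

variable {ι R : Type} [Fintype ι] [DecidableEq ι] [CommRing R] [LinearOrder R]
  [IsStrictOrderedRing R]

theorem seedStep_F_eq (B₀ : Matrix ι ι R) (s : SeedData ι R) (ℓ : ι) :
    (seedStep B₀ s ℓ).F = s.F * Jmat ℓ +
      colSel ℓ (matPos (-s.C) + s.F * matPos (-s.B) + matPos (s.C + s.F * s.B)) := by
  simp only [seedStep, colSel_eq_mul_single, ← mul_assoc, ← add_mul]
  rw [emax_mul_single, emax_eq_add_matPos_sub]
  congr 4
  rw [matPos_neg, matPos_neg, mul_sub]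
  abel

def negSeed (B : Matrix ι ι R) (s : SeedData ι R) : SeedData ι R :=
  ⟨-s.B, s.C + s.F * s.B, s.G + B * s.F, s.F⟩

variable (B : Matrix ι ι R) (s : SeedData ι R) (ℓ : ι)

theorem seedStep_negSeed_F : (seedStep (-B) (negSeed B s) ℓ).F = (seedStep B s ℓ).F := by
  rw [seedStep_F_eq, seedStep_F_eq]
  simp only [negSeed, neg_neg, matPos_neg, mul_neg, mul_sub, add_neg_cancel_right]
  congr 2
  abel

theorem seedStep_negSeed_C (h : s.B ℓ ℓ = 0) :
    (seedStep (-B) (negSeed B s) ℓ).C =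
      (seedStep B s ℓ).C + (seedStep B s ℓ).F * (seedStep B s ℓ).B := by
  have hP : matPos s.B ℓ ℓ = 0 := by simp [matPos, h]
  rw [seedStep_F_eq]
  simp only [seedStep, negSeed, mutate_eq_mul h]
  simp only [colSel_eq_mul_single, rowSel_eq_single_mul, Jmat_eq_one_sub_single, matPos_neg,
    mul_add, add_mul, mul_sub, sub_mul, mul_neg, mul_one, one_mul, mul_smul_comm,
    smul_mul_assoc, ← mul_assoc, mul_single_mul_single, mul_single_mul_mul_single_of_eq_zero h,
    mul_single_mul_mul_single_of_eq_zero hP, zero_mul, smul_zero, smul_add, smul_sub, add_zero]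
  abel

theorem seedStep_negSeed_G (hGB : s.G * s.B = B * s.C) :
    (seedStep (-B) (negSeed B s) ℓ).G = (seedStep B s ℓ).G + B * (seedStep B s ℓ).F := by
  rw [seedStep_F_eq]
  simp only [seedStep, negSeed, colSel_eq_mul_single, matPos_neg, mul_add, add_mul, mul_sub,
    sub_mul, neg_mul, ← mul_assoc, hGB]
  abel

theorem seedStep_negSeed (h : s.B ℓ ℓ = 0) (hGB : s.G * s.B = B * s.C) :
    seedStep (-B) (negSeed B s) ℓ = negSeed B (seedStep B s ℓ) := by
  have hB : (seedStep (-B) (negSeed B s) ℓ).B = -(seedStep B s ℓ).B := mutate_neg s.B ℓ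
  conv_rhs => rw [negSeed]
  rw [← seedStep_negSeed_C B s ℓ h, ← seedStep_negSeed_G B s ℓ hGB,
    ← seedStep_negSeed_F, ← hB]

theorem seedStep_G_mul_B (h : s.B ℓ ℓ = 0) (hGB : s.G * s.B = B * s.C) :
    (seedStep B s ℓ).G * (seedStep B s ℓ).B = B * (seedStep B s ℓ).C := by
  have hP : matPos s.B ℓ ℓ = 0 := by simp [matPos, h]
  simp only [seedStep, mutate_eq_mul h]
  simp only [colSel_eq_mul_single, rowSel_eq_single_mul, Jmat_eq_one_sub_single, matPos_neg,
    mul_add, add_mul, mul_sub, sub_mul, mul_one, one_mul, mul_smul_comm, smul_mul_assoc,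
    ← mul_assoc, mul_single_mul_single, mul_single_mul_mul_single_of_eq_zero h,
    mul_single_mul_mul_single_of_eq_zero hP, zero_mul, smul_zero, smul_add, smul_sub, add_zero,
    hGB]
  abel

end SeedStep

section SkewSymmetrizable

variable {ι : Type} [Fintype ι] [DecidableEq ι]

theorem isSkewSymmetrizable_iff {B : Matrix ι ι ℤ} :
    IsSkewSymmetrizable B ↔ ∃ d : ι → ℤ, (∀ i, 0 < d i) ∧ ∀ i j, d i * B i j = -(d j * B j i) := by
  refine exists_congr fun d => and_congr_right fun _ => ?_
  simp only [← Matrix.ext_iff, transpose_apply, neg_apply, diagonal_mul]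
  constructor <;> intro h i j <;> linarith [h j i]

theorem IsSkewSymmetrizable.apply_self {B : Matrix ι ι ℤ} (hB : IsSkewSymmetrizable B) (i : ι) :
    B i i = 0 := by
  obtain ⟨d, hd, hskew⟩ := isSkewSymmetrizable_iff.1 hB
  have := hskew i i
  have := hd i
  nlinarith

theorem IsSkewSymmetrizable.mutate {B : Matrix ι ι ℤ} (hB : IsSkewSymmetrizable B) (ℓ : ι) :
    IsSkewSymmetrizable (mutate B ℓ) := by
  obtain ⟨d, hd, hskew⟩ := isSkewSymmetrizable_iff.1 hB
  have hpos : ∀ i j, d i * max (B i j) 0 = d j * max (-B j i) 0 := fun i j => by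
    rw [mul_max_of_nonneg _ _ (hd i).le, mul_max_of_nonneg _ _ (hd j).le, hskew, mul_neg]
    simp
  refine isSkewSymmetrizable_iff.2 ⟨d, hd, fun i j => ?_⟩
  simp only [_root_.mutate]
  by_cases h : i = ℓ ∨ j = ℓ
  · rw [if_pos h, if_pos h.symm]
    linear_combination -hskew i j
  · rw [if_neg h, if_neg (mt Or.symm h)]
    linear_combination hskew i j + B ℓ j * hpos i ℓ + max (-B ℓ j) 0 * hskew i ℓ
      + B ℓ i * hpos j ℓ + max (-B ℓ i) 0 * hskew j ℓ

end SkewSymmetrizable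

theorem foldl_seedStep_neg {ι : Type} [Fintype ι] [DecidableEq ι] (B : Matrix ι ι ℤ)
    (p : List ι) (s : SeedData ι ℤ) (hs : IsSkewSymmetrizable s.B)
    (hGB : s.G * s.B = B * s.C) :
    p.foldl (seedStep (-B)) (negSeed B s) = negSeed B (p.foldl (seedStep B) s) := by
  induction p generalizing s with
  | nil => rfl
  | cons ℓ p ih =>
    have hℓ := hs.apply_self ℓ
    rw [List.foldl_cons, List.foldl_cons, seedStep_negSeed B s ℓ hℓ hGB]
    exact ih _ (hs.mutate ℓ) (seedStep_G_mul_B B s ℓ hℓ hGB)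

theorem seedOf_neg {ι : Type} [Fintype ι] [DecidableEq ι] {B : Matrix ι ι ℤ}
    (hB : IsSkewSymmetrizable B) (p : List ι) : seedOf (-B) p = negSeed B (seedOf B p) := by
  have h₀ : negSeed B ⟨B, 1, 1, 0⟩ = ⟨-B, 1, 1, 0⟩ := by simp [negSeed]
  rw [seedOf, seedOf, ← h₀]
  exact foldl_seedStep_neg B p _ hB (by simp)

/-- `G^{-B;t_0}_t = G^{B;t_0}_t + B · F^{B;t_0}_t`. -/
theorem Gmat_neg_eq_Gmat_add_B_mul_Fmat {n : ℕ} (B : Matrix (Fin n) (Fin n) ℤ)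
    (hB : IsSkewSymmetrizable B) (p : List (Fin n)) :
    Gmat (-B) p = Gmat B p + B * Fmat B p := by
  rw [Gmat, seedOf_neg hB]
  rfl
end

section
/- Let B be a skew-symmetrizable n×n integer matrix with positive diagonal skew-symmetrizer D, and let t be reached from t_0 by the path (i_1,…,i_m) with intermediate vertices t_0, t_1, …, t_m = t. Then the principal extension satisfies the 2n×2n block identity B̄_t = [[B_t, −D^{−1}(C^{B;t_0}_t)^T D], [C^{B;t_0}_t, S]], where S = Σ_{s=0}^{m−1} ( C^{B;t_0}_{t_s} [−D^{−1}(C^{B;t_0}_{t_s})^T D]^{i_{s+1}•}_+ − [−C^{B;t_0}_{t_s}]^{•i_{s+1}}_+ D^{−1}(C^{B;t_0}_{t_s})^T D ). -/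
open Matrix

/-!
Since `D` skew-symmetrizes `B`, the block matrix `diag(D, D)` skew-symmetrizes the principal
extension `B̄`, and mutation preserves skew-symmetrizers. Hence the upper right block of `B̄_t`
is always `-D⁻¹ (B̄_t)₂₁ᵀ D`, so only the lower blocks need to be tracked. Mutating in a
direction `ℓ` of the first batch, the mutation rule restricted to the lower left block is
exactly the recursion defining `C_t` (because `(B_t)_ℓℓ = 0`), and on the lower right block it
adds the next summand of `S`.
-/

/-- Reconciles the two conventions `[a]₊ b + a [-b]₊` (in `mutate`) and `a [b]₊ + [-a]₊ b`
(in the mutation of `C`-matrices). -/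
theorem max_zero_mul_add_mul_max_neg_zero {R : Type} [CommRing R] [LinearOrder R]
    [IsStrictOrderedRing R] (a b : R) :
    max a 0 * b + a * max (-b) 0 = a * max b 0 + max (-a) 0 * b := by
  linear_combination b * max_zero_sub_eq_self a - a * max_zero_sub_eq_self b

section Mutation

variable {ι : Type} [Fintype ι] [DecidableEq ι]
variable {R : Type} [CommRing R] [LinearOrder R]

def IsSkewBy (d : ι → R) (B : Matrix ι ι R) : Prop :=
  ∀ i j, d i * B i j = -(d j * B j i)

def mutateC (B C : Matrix ι ι R) (ℓ : ι) : Matrix ι ι R :=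
  C * (Jmat ℓ + rowSel ℓ (matPos B)) + colSel ℓ (matPos (-C)) * B

theorem mutateC_apply (B C : Matrix ι ι R) (ℓ i j : ι) :
    mutateC B C ℓ i j =
      (if j = ℓ then -C i j else C i j) + C i ℓ * max (B ℓ j) 0 + max (-C i ℓ) 0 * B ℓ j := by
  simp only [mutateC, Matrix.add_apply, Matrix.mul_add, Matrix.mul_apply, Jmat, rowSel, colSel,
    matPos, Matrix.diagonal_apply, Matrix.neg_apply]
  by_cases hj : j = ℓ <;> simp [hj, Finset.sum_ite_eq', ite_mul, mul_ite]

theorem seedOf_append_singleton (B : Matrix ι ι R) (p : List ι) (ℓ : ι) :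
    seedOf B (p ++ [ℓ]) = seedStep B (seedOf B p) ℓ := by
  simp [seedOf, List.foldl_append]

theorem Bpath_append_singleton (B : Matrix ι ι R) (p : List ι) (ℓ : ι) :
    Bpath B (p ++ [ℓ]) = mutate (Bpath B p) ℓ := by
  rw [Bpath, seedOf_append_singleton]; rfl

theorem Cmat_append_singleton (B : Matrix ι ι R) (p : List ι) (ℓ : ι) :
    Cmat B (p ++ [ℓ]) = mutateC (Bpath B p) (Cmat B p) ℓ := by
  rw [Cmat, seedOf_append_singleton]; rfl

variable [IsStrictOrderedRing R] {d : ι → R} {B : Matrix ι ι R}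

omit [Fintype ι] [DecidableEq ι] in
theorem IsSkewBy.apply_self_eq_zero (h : IsSkewBy d B) {i : ι} (hi : d i ≠ 0) : B i i = 0 := by
  have h2 : d i * B i i = 0 := by linarith [h i i]
  exact (mul_eq_zero.mp h2).resolve_left hi

omit [Fintype ι] in
theorem IsSkewBy.mutate (h : IsSkewBy d B) (hd : ∀ i, 0 ≤ d i) (k : ι) :
    IsSkewBy d (mutate B k) := by
  intro i j
  by_cases hk : i = k ∨ j = k
  · simp only [_root_.mutate, if_pos hk, if_pos hk.symm]
    linarith [h i j]
  · have hk' : ¬(j = k ∨ i = k) := fun h' => hk h'.symm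
    simp only [_root_.mutate, if_neg hk, if_neg hk']
    have hi : d i * max (B i k) 0 = d k * max (-B k i) 0 := by
      rw [mul_max_of_nonneg _ _ (hd i), mul_max_of_nonneg _ _ (hd k), h i k, mul_neg, mul_zero,
        mul_zero]
    have hj : d j * max (B j k) 0 = d k * max (-B k j) 0 := by
      rw [mul_max_of_nonneg _ _ (hd j), mul_max_of_nonneg _ _ (hd k), h j k, mul_neg, mul_zero,
        mul_zero]
    linear_combination h i j + B k j * hi + max (-B k j) 0 * h i k + B k i * hj
      + max (-B k i) 0 * h j k

theorem IsSkewBy.Bpath (h : IsSkewBy d B) (hd : ∀ i, 0 ≤ d i) (p : List ι) :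
    IsSkewBy d (Bpath B p) := by
  induction p using List.reverseRecOn with
  | nil => exact h
  | append_singleton p ℓ ih => rw [Bpath_append_singleton]; exact ih.mutate hd ℓ

end Mutation

section Map

variable {ι : Type} [Fintype ι] [DecidableEq ι]
variable {R S : Type} [CommRing R] [CommRing S] (f : R →+* S)

omit [Fintype ι] in
theorem rowSel_map (k : ι) (A : Matrix ι ι R) : (rowSel k A).map f = rowSel k (A.map f) := by
  ext i j; simp [rowSel, apply_ite f]

omit [Fintype ι] in
theorem colSel_map (k : ι) (A : Matrix ι ι R) : (colSel k A).map f = colSel k (A.map f) := by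
  ext i j; simp [colSel, apply_ite f]

omit [Fintype ι] in
theorem Jmat_map (k : ι) : (Jmat k : Matrix ι ι R).map f = Jmat k := by
  ext i j; simp [Jmat, Matrix.diagonal_apply, apply_ite f]

variable [LinearOrder R] [LinearOrder S] {f} (hf : Monotone f)
include hf

omit [Fintype ι] [DecidableEq ι] in
theorem matPos_map (A : Matrix ι ι R) : (matPos A).map f = matPos (A.map f) := by
  ext i j; simp [matPos, hf.map_max]

omit [Fintype ι] in
theorem mutate_map (A : Matrix ι ι R) (k : ι) : (mutate A k).map f = mutate (A.map f) k := by
  ext i j; simp only [mutate, Matrix.map_apply]; split_ifs <;> simp [hf.map_max]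

theorem mutateC_map (B C : Matrix ι ι R) (ℓ : ι) :
    (mutateC B C ℓ).map f = mutateC (B.map f) (C.map f) ℓ := by
  rw [mutateC, mutateC, Matrix.map_add f (map_add f), Matrix.map_mul, Matrix.map_mul,
    Matrix.map_add f (map_add f), Jmat_map, rowSel_map, colSel_map, matPos_map hf,
    matPos_map hf, Matrix.map_neg f (map_neg f)]

theorem Bpath_map (B : Matrix ι ι R) (p : List ι) : (Bpath B p).map f = Bpath (B.map f) p := by
  induction p using List.reverseRecOn with
  | nil => rfl
  | append_singleton p ℓ ih =>
    rw [Bpath_append_singleton, Bpath_append_singleton, ← ih, mutate_map hf]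

theorem Cmat_map (B : Matrix ι ι R) (p : List ι) : (Cmat B p).map f = Cmat (B.map f) p := by
  induction p using List.reverseRecOn with
  | nil => exact Matrix.map_one f (map_zero f) (map_one f)
  | append_singleton p ℓ ih =>
    rw [Cmat_append_singleton, Cmat_append_singleton, ← ih, ← Bpath_map hf, mutateC_map hf]

end Map

section Blocks

variable {ι : Type} [Fintype ι] [DecidableEq ι]
variable {R : Type} [CommRing R]

theorem mul_rowSel_apply (C A : Matrix ι ι R) (ℓ i j : ι) :
    (C * rowSel ℓ A) i j = C i ℓ * A ℓ j := by
  simp [Matrix.mul_apply, rowSel, mul_ite]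

theorem colSel_mul_apply (C A : Matrix ι ι R) (ℓ i j : ι) :
    (colSel ℓ C * A) i j = C i ℓ * A ℓ j := by
  simp [Matrix.mul_apply, colSel, ite_mul]

variable [LinearOrder R]

omit [Fintype ι] in
theorem toBlocks₁₁_mutate_inl (M : Matrix (ι ⊕ ι) (ι ⊕ ι) R) (ℓ : ι) :
    (mutate M (.inl ℓ)).toBlocks₁₁ = mutate M.toBlocks₁₁ ℓ := by
  ext i j; simp [mutate, Matrix.toBlocks₁₁]

variable [IsStrictOrderedRing R]

theorem toBlocks₂₁_mutate_inl (M : Matrix (ι ⊕ ι) (ι ⊕ ι) R) (ℓ : ι)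
    (hℓ : M (.inl ℓ) (.inl ℓ) = 0) :
    (mutate M (.inl ℓ)).toBlocks₂₁ = mutateC M.toBlocks₁₁ M.toBlocks₂₁ ℓ := by
  ext i j
  simp only [mutateC_apply, Matrix.toBlocks₂₁, Matrix.toBlocks₁₁, Matrix.of_apply, mutate,
    Sum.inl.injEq, reduceCtorEq, false_or]
  split_ifs with hj
  · subst hj; simp [hℓ]
  · linear_combination
      max_zero_mul_add_mul_max_neg_zero (M (.inr i) (.inl ℓ)) (M (.inl ℓ) (.inl j))

theorem toBlocks₂₂_mutate_inl (M : Matrix (ι ⊕ ι) (ι ⊕ ι) R) (ℓ : ι) :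
    (mutate M (.inl ℓ)).toBlocks₂₂ = M.toBlocks₂₂ +
      (M.toBlocks₂₁ * rowSel ℓ (matPos M.toBlocks₁₂) +
        colSel ℓ (matPos (-M.toBlocks₂₁)) * M.toBlocks₁₂) := by
  ext i j
  simp only [Matrix.add_apply, mul_rowSel_apply, colSel_mul_apply]
  simp only [Matrix.toBlocks₂₂, Matrix.toBlocks₂₁, Matrix.toBlocks₁₂, Matrix.of_apply, mutate,
    matPos, Matrix.neg_apply, reduceCtorEq, or_self, if_false]
  linear_combination
    max_zero_mul_add_mul_max_neg_zero (M (.inr i) (.inl ℓ)) (M (.inl ℓ) (.inr j))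

end Blocks

section Transpose

variable {ι : Type} [Fintype ι] [DecidableEq ι]
variable {K : Type} [Field K]

/-- `D⁻¹ Cᵀ D`, the adjoint of `C` for the bilinear form `D = diagonal d`; a junk value unless
every `d i` is nonzero. -/
noncomputable def transposeBy (d : ι → K) (C : Matrix ι ι K) : Matrix ι ι K :=
  (diagonal d)⁻¹ * Cᵀ * diagonal d

theorem transposeBy_apply {d : ι → K} (hd : ∀ i, d i ≠ 0) (C : Matrix ι ι K) (i j : ι) :
    transposeBy d C i j = (d i)⁻¹ * C j i * d j := by
  have hinv : (diagonal d)⁻¹ = diagonal d⁻¹ :=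
    Matrix.inv_eq_left_inv (by simp [Matrix.diagonal_mul_diagonal, hd])
  simp [transposeBy, hinv, Matrix.mul_diagonal, Matrix.diagonal_mul]

theorem transposeBy_one {d : ι → K} (hd : ∀ i, d i ≠ 0) : transposeBy d 1 = 1 := by
  ext i j
  rw [transposeBy_apply hd, Matrix.one_apply, Matrix.one_apply]
  by_cases h : i = j
  · subst h; simp [hd i]
  · simp [h, Ne.symm h]

theorem IsSkewBy.toBlocks₁₂_eq {d : ι → K} {M : Matrix (ι ⊕ ι) (ι ⊕ ι) K}
    (h : IsSkewBy (Sum.elim d d) M) (hd : ∀ i, d i ≠ 0) :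
    M.toBlocks₁₂ = -transposeBy d M.toBlocks₂₁ := by
  ext i j
  rw [Matrix.neg_apply, transposeBy_apply hd]
  have hij := h (.inl i) (.inr j)
  simp only [Sum.elim_inl, Sum.elim_inr] at hij
  simp only [Matrix.toBlocks₁₂, Matrix.toBlocks₂₁, Matrix.of_apply]
  field_simp [hd i]
  linear_combination hij

end Transpose

theorem sum_take_get_append_singleton {M α : Type*} [AddCommMonoid M] (G : List α → α → M)
    (p : List α) (a : α) :
    ∑ s : Fin (p ++ [a]).length, G ((p ++ [a]).take s) ((p ++ [a]).get s) =
      ∑ s : Fin p.length, G (p.take s) (p.get s) + G p a := by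
  have hlen : p.length + 1 = (p ++ [a]).length := by simp
  rw [← Fin.sum_congr' _ hlen, Fin.sum_univ_castSucc]
  congr 1
  · refine Finset.sum_congr rfl fun s _ => ?_
    simp [List.take_append_of_le_length s.2.le, List.getElem_append_left s.2]
  · simp

section PrincipalExtension

variable {ι : Type} [Fintype ι] [DecidableEq ι]

theorem isSkewBy_iff {R : Type} [CommRing R] (d : ι → R) (B : Matrix ι ι R) :
    IsSkewBy d B ↔ (diagonal d * B)ᵀ = -(diagonal d * B) := by
  simp only [IsSkewBy, ← Matrix.ext_iff, Matrix.transpose_apply, Matrix.neg_apply,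
    Matrix.diagonal_mul]
  exact ⟨fun h i j => h j i, fun h i j => h j i⟩

omit [Fintype ι] [DecidableEq ι] in
theorem IsSkewBy.map {R S : Type} [CommRing R] [CommRing S] {d : ι → R} {B : Matrix ι ι R}
    (h : IsSkewBy d B) (f : R →+* S) : IsSkewBy (f ∘ d) (B.map f) := fun i j => by
  simp [← map_mul, h i j]

omit [Fintype ι] in
theorem IsSkewBy.fromBlocks_neg_one_one_zero {R : Type} [CommRing R] {d : ι → R}
    {B : Matrix ι ι R} (h : IsSkewBy d B) :
    IsSkewBy (Sum.elim d d) (fromBlocks B (-1) 1 0) := by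
  rintro (i | i) (j | j)
  · exact h i j
  all_goals
    by_cases hij : i = j
    · subst hij; simp
    · simp [hij, Ne.symm hij]

theorem Bpath_fromBlocks_map_inl {K : Type} [Field K] [LinearOrder K] [IsStrictOrderedRing K]
    {d : ι → K} (hd : ∀ i, 0 < d i) {B : Matrix ι ι K} (hB : IsSkewBy d B) (p : List ι) :
    Bpath (fromBlocks B (-1) 1 0) (p.map Sum.inl) =
      fromBlocks (Bpath B p) (-transposeBy d (Cmat B p)) (Cmat B p)
        (∑ s : Fin p.length,
          (Cmat B (p.take s) * rowSel (p.get s) (matPos (-transposeBy d (Cmat B (p.take s))))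
            - colSel (p.get s) (matPos (-Cmat B (p.take s))) *
              transposeBy d (Cmat B (p.take s)))) := by
  have hd0 : ∀ i, d i ≠ 0 := fun i => (hd i).ne'
  set Bbar : Matrix (ι ⊕ ι) (ι ⊕ ι) K := fromBlocks B (-1) 1 0 with hBbar
  have hskew (q : List ι) : IsSkewBy (Sum.elim d d) (Bpath Bbar (q.map Sum.inl)) :=
    hB.fromBlocks_neg_one_one_zero.Bpath (by rintro (i | i) <;> exact (hd i).le) _
  induction p using List.reverseRecOn with
  | nil => simp [hBbar, Bpath, Cmat, seedOf, transposeBy_one hd0]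
  | append_singleton p ℓ ih =>
    set M := Bpath Bbar (p.map Sum.inl)
    have hM : Bpath Bbar ((p ++ [ℓ]).map Sum.inl) = mutate M (.inl ℓ) := by
      rw [List.map_append, List.map_singleton, Bpath_append_singleton]
    have h11 : (mutate M (.inl ℓ)).toBlocks₁₁ = Bpath B (p ++ [ℓ]) := by
      rw [toBlocks₁₁_mutate_inl, ih, Matrix.toBlocks_fromBlocks₁₁, Bpath_append_singleton]
    have h21 : (mutate M (.inl ℓ)).toBlocks₂₁ = Cmat B (p ++ [ℓ]) := by
      rw [toBlocks₂₁_mutate_inl M ℓ ((hskew p).apply_self_eq_zero (i := .inl ℓ) (hd0 ℓ)), ih,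
        Matrix.toBlocks_fromBlocks₁₁, Matrix.toBlocks_fromBlocks₂₁, Cmat_append_singleton]
    have h12 := (hskew (p ++ [ℓ])).toBlocks₁₂_eq hd0
    rw [hM, h21] at h12
    rw [hM, ← Matrix.fromBlocks_toBlocks (mutate M (.inl ℓ)), h11, h12, h21,
      toBlocks₂₂_mutate_inl, ih, Matrix.toBlocks_fromBlocks₂₂, Matrix.toBlocks_fromBlocks₂₁,
      Matrix.toBlocks_fromBlocks₁₂, sum_take_get_append_singleton
        (fun q k => Cmat B q * rowSel k (matPos (-transposeBy d (Cmat B q)))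
          - colSel k (matPos (-Cmat B q)) * transposeBy d (Cmat B q)),
      mul_neg, ← sub_eq_add_neg]

end PrincipalExtension

/-- block form of the mutated principal extension (without sign-coherence). -/
theorem pext_Bpath_block {n : ℕ} (B : Matrix (Fin n) (Fin n) ℤ) (d : Fin n → ℤ)
    (hd : ∀ i, 0 < d i)
    (hskew : (Matrix.diagonal d * B)ᵀ = -(Matrix.diagonal d * B)) (p : List (Fin n)) :
    (Bpath (pext B) (p.map Sum.inl)).map ((↑) : ℤ → ℚ) =
      Matrix.fromBlocks ((Bpath B p).map ((↑) : ℤ → ℚ)) (-dCd d (Cmat B p))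
        ((Cmat B p).map ((↑) : ℤ → ℚ))
        (∑ s : Fin p.length,
          (((Cmat B (p.take s.1)).map ((↑) : ℤ → ℚ)) *
              rowSel (p.get s) (matPos (-dCd d (Cmat B (p.take s.1))))
            - colSel (p.get s) (matPos (-((Cmat B (p.take s.1)).map ((↑) : ℤ → ℚ)))) *
              dCd d (Cmat B (p.take s.1)))) := by
  have hBpath (A : Matrix (Fin n ⊕ Fin n) (Fin n ⊕ Fin n) ℤ) (q : List (Fin n ⊕ Fin n)) :
      (Bpath A q).map ((↑) : ℤ → ℚ) = Bpath (A.map (↑)) q :=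
    Bpath_map (f := Int.castRingHom ℚ) Int.cast_mono A q
  have hBpath' (q : List (Fin n)) : (Bpath B q).map ((↑) : ℤ → ℚ) = Bpath (B.map (↑)) q :=
    Bpath_map (f := Int.castRingHom ℚ) Int.cast_mono B q
  have hCmat (q : List (Fin n)) : (Cmat B q).map ((↑) : ℤ → ℚ) = Cmat (B.map (↑)) q :=
    Cmat_map (f := Int.castRingHom ℚ) Int.cast_mono B q
  have hdCd (q : List (Fin n)) :
      dCd d (Cmat B q) = transposeBy (fun i => (d i : ℚ)) (Cmat (B.map (↑)) q) := by
    rw [← hCmat]; rfl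
  have hpext : (pext B).map ((↑) : ℤ → ℚ) = fromBlocks (B.map (↑)) (-1) 1 0 := by
    rw [pext, Matrix.fromBlocks_map, Matrix.map_neg _ Int.cast_neg,
      Matrix.map_one _ Int.cast_zero Int.cast_one, Matrix.map_zero _ Int.cast_zero]
  have hB : IsSkewBy (fun i => (d i : ℚ)) (B.map (↑)) :=
    ((isSkewBy_iff d B).2 hskew).map (Int.castRingHom ℚ)
  rw [hBpath, hpext, Bpath_fromBlocks_map_inl (fun i => by exact_mod_cast hd i) hB]
  simp only [hBpath', hCmat, hdCd]
end
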